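/- For 0 < ε < 1/4 and a > 0, the Gaussian trial functions satisfy ∬ f_a(x) f_a(y) e^{ε|x−y|²} dγ(x) dγ(y) ≤ ((2a+1)/(2π))^n (π/(a − 2ε + 1/2))^n; consequently, if α > (2π)^{-n} (π/(−2ε + 1/2))^n, then for all sufficiently small a > 0 the exponential moment bound ∬ f_a f_a e^{ε|x−y|²} dγ dγ ≤ α holds. -/
import Mathlib

open MeasureTheory Real Filter Topology

noncomputable def gaussian (n : ℕ) : Measure (EuclideanSpace ℝ (Fin n)) :=
  volume.withDensity (fun x => ENNReal.ofReal ((2 * π) ^ (-(n : ℝ) / 2) * Real.exp (-‖x‖ ^ 2 / 2)))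

noncomputable def fa (n : ℕ) (a : ℝ) (x : EuclideanSpace ℝ (Fin n)) : ℝ :=
  (2 * a + 1) ^ ((n : ℝ) / 2) * Real.exp (-a * ‖x‖ ^ 2)

lemma integrable_gauss (n : ℕ) {b : ℝ} (hb : 0 < b) :
    Integrable (fun v : EuclideanSpace ℝ (Fin n) => Real.exp (-b * ‖v‖ ^ 2)) := by
  have h := (GaussianFourier.integrable_cexp_neg_mul_sq_norm_add
    (V := EuclideanSpace ℝ (Fin n)) (b := (b : ℂ)) (by simpa using hb) 0 0).norm
  simpa [Complex.norm_exp, ← Complex.ofReal_pow, Complex.ofReal_re] using h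

lemma integral_gauss (n : ℕ) {b : ℝ} (hb : 0 < b) :
    ∫ v : EuclideanSpace ℝ (Fin n), Real.exp (-b * ‖v‖ ^ 2) = (π / b) ^ ((n : ℝ) / 2) := by
  rw [GaussianFourier.integral_rexp_neg_mul_sq_norm hb, finrank_euclideanSpace_fin]

lemma integral_gaussian_eq (n : ℕ) (f : EuclideanSpace ℝ (Fin n) → ℝ) :
    ∫ x, f x ∂(gaussian n) =
      ∫ x, ((2 * π) ^ (-(n : ℝ) / 2) * Real.exp (-‖x‖ ^ 2 / 2)) * f x := by
  have hm : Measurable (fun x : EuclideanSpace ℝ (Fin n) =>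
      Real.toNNReal ((2 * π) ^ (-(n : ℝ) / 2) * Real.exp (-‖x‖ ^ 2 / 2))) := by
    apply Measurable.real_toNNReal
    fun_prop
  rw [gaussian]
  rw [show (fun x : EuclideanSpace ℝ (Fin n) =>
      ENNReal.ofReal ((2 * π) ^ (-(n : ℝ) / 2) * Real.exp (-‖x‖ ^ 2 / 2)))
    = (fun x => ((Real.toNNReal ((2 * π) ^ (-(n : ℝ) / 2) * Real.exp (-‖x‖ ^ 2 / 2)) : NNReal) : ENNReal)) from rfl]
  rw [integral_withDensity_eq_integral_smul hm]
  congr 1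
  ext x
  rw [NNReal.smul_def, Real.coe_toNNReal _ (by positivity)]
  simp [smul_eq_mul]

theorem trial_exponential_moment_bound (n : ℕ) (ε : ℝ) (hε₀ : 0 < ε) (hε : ε < 1 / 4) :
    (∀ a : ℝ, 0 < a →
      ∫ x, ∫ y, fa n a x * fa n a y * Real.exp (ε * ‖x - y‖ ^ 2)
          ∂(gaussian n) ∂(gaussian n) ≤
        ((2 * a + 1) / (2 * π)) ^ (n : ℝ) * (π / (a - 2 * ε + 1 / 2)) ^ (n : ℝ)) ∧
    ∀ α : ℝ, α > (2 * π) ^ (-(n : ℝ)) * (π / (-2 * ε + 1 / 2)) ^ (n : ℝ) →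
      ∀ᶠ a in 𝓝[>] (0 : ℝ),
        ∫ x, ∫ y, fa n a x * fa n a y * Real.exp (ε * ‖x - y‖ ^ 2)
            ∂(gaussian n) ∂(gaussian n) ≤ α := by
  have h2π : (0 : ℝ) < 2 * π := by positivity
  have hmain : ∀ a : ℝ, 0 < a →
      ∫ x, ∫ y, fa n a x * fa n a y * Real.exp (ε * ‖x - y‖ ^ 2)
          ∂(gaussian n) ∂(gaussian n) ≤
        ((2 * a + 1) / (2 * π)) ^ (n : ℝ) * (π / (a - 2 * ε + 1 / 2)) ^ (n : ℝ) := by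
    intro a ha
    set c : ℝ := a - 2 * ε + 1 / 2 with hc_def
    have hc : 0 < c := by simp only [hc_def]; linarith
    have h2a1 : (0 : ℝ) < 2 * a + 1 := by linarith
    set ρ : EuclideanSpace ℝ (Fin n) → ℝ :=
      fun x => (2 * π) ^ (-(n : ℝ) / 2) * Real.exp (-‖x‖ ^ 2 / 2) with hρ_def
    set K : ℝ := (2 * a + 1) ^ ((n : ℝ) / 2) * (2 * π) ^ (-(n : ℝ) / 2) with hK_def
    set h : EuclideanSpace ℝ (Fin n) → ℝ :=
      fun x => (2 * a + 1) ^ ((n : ℝ) / 2) * Real.exp ((2 * ε - a) * ‖x‖ ^ 2) with hh_def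
    set I : ℝ := K * (π / c) ^ ((n : ℝ) / 2) with hI_def
    have hIval : ∫ x : EuclideanSpace ℝ (Fin n), K * Real.exp (-c * ‖x‖ ^ 2) = I := by
      rw [integral_const_mul, integral_gauss n hc]
    have hgInt : Integrable (fun x : EuclideanSpace ℝ (Fin n) => K * Real.exp (-c * ‖x‖ ^ 2)) :=
      (integrable_gauss n hc).const_mul K
    -- pointwise bound
    have hbd : ∀ x y : EuclideanSpace ℝ (Fin n),
        ρ y * (fa n a x * fa n a y * Real.exp (ε * ‖x - y‖ ^ 2))
          ≤ h x * (K * Real.exp (-c * ‖y‖ ^ 2)) := by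
      intro x y
      have hxy : ‖x - y‖ ^ 2 ≤ 2 * ‖x‖ ^ 2 + 2 * ‖y‖ ^ 2 := by
        have h1 : ‖x - y‖ ≤ ‖x‖ + ‖y‖ := norm_sub_le x y
        have h2 : ‖x - y‖ ^ 2 ≤ (‖x‖ + ‖y‖) ^ 2 := by
          apply pow_le_pow_left₀ (norm_nonneg _) h1
        nlinarith [h2, sq_nonneg (‖x‖ - ‖y‖)]
      have hL : ρ y * (fa n a x * fa n a y * Real.exp (ε * ‖x - y‖ ^ 2))
          = ((2 * π) ^ (-(n : ℝ) / 2) * (2 * a + 1) ^ ((n : ℝ) / 2) * (2 * a + 1) ^ ((n : ℝ) / 2))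
            * Real.exp (-‖y‖ ^ 2 / 2 + -a * ‖x‖ ^ 2 + -a * ‖y‖ ^ 2 + ε * ‖x - y‖ ^ 2) := by
        simp only [hρ_def, fa, Real.exp_add]; ring
      have hR : h x * (K * Real.exp (-c * ‖y‖ ^ 2))
          = ((2 * π) ^ (-(n : ℝ) / 2) * (2 * a + 1) ^ ((n : ℝ) / 2) * (2 * a + 1) ^ ((n : ℝ) / 2))
            * Real.exp ((2 * ε - a) * ‖x‖ ^ 2 + -c * ‖y‖ ^ 2) := by
        simp only [hh_def, hK_def, Real.exp_add]; ring
      rw [hL, hR]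
      apply mul_le_mul_of_nonneg_left _ (by positivity)
      apply Real.exp_le_exp.mpr
      simp only [hc_def]
      nlinarith [mul_le_mul_of_nonneg_left hxy hε₀.le]
    have hnn : ∀ x y : EuclideanSpace ℝ (Fin n),
        0 ≤ ρ y * (fa n a x * fa n a y * Real.exp (ε * ‖x - y‖ ^ 2)) := by
      intro x y
      simp only [hρ_def, fa]
      positivity
    -- inner bound
    have hinner : ∀ x : EuclideanSpace ℝ (Fin n),
        ∫ y, fa n a x * fa n a y * Real.exp (ε * ‖x - y‖ ^ 2) ∂(gaussian n) ≤ h x * I := by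
      intro x
      rw [integral_gaussian_eq]
      calc ∫ y, ρ y * (fa n a x * fa n a y * Real.exp (ε * ‖x - y‖ ^ 2))
          ≤ ∫ y, h x * (K * Real.exp (-c * ‖y‖ ^ 2)) := by
            apply integral_mono_of_nonneg
            · exact Eventually.of_forall (fun y => hnn x y)
            · exact hgInt.const_mul (h x)
            · exact Eventually.of_forall (fun y => hbd x y)
        _ = h x * I := by rw [integral_const_mul, hIval]
    -- outer bound
    have hρh : ∀ x : EuclideanSpace ℝ (Fin n),
        ρ x * (h x * I) = K * Real.exp (-c * ‖x‖ ^ 2) * I := by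
      intro x
      have : Real.exp (-‖x‖ ^ 2 / 2) * Real.exp ((2 * ε - a) * ‖x‖ ^ 2)
          = Real.exp (-c * ‖x‖ ^ 2) := by
        rw [← Real.exp_add]
        congr 1
        simp only [hc_def]; ring
      simp only [hρ_def, hh_def, hK_def]
      rw [← this]; ring
    have houter : ∫ x, ∫ y, fa n a x * fa n a y * Real.exp (ε * ‖x - y‖ ^ 2)
        ∂(gaussian n) ∂(gaussian n) ≤ I * I := by
      rw [integral_gaussian_eq]
      calc ∫ x, ρ x * ∫ y, fa n a x * fa n a y * Real.exp (ε * ‖x - y‖ ^ 2) ∂(gaussian n)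
          ≤ ∫ x, K * Real.exp (-c * ‖x‖ ^ 2) * I := by
            apply integral_mono_of_nonneg
            · exact Eventually.of_forall (fun x => by
                have : 0 ≤ ρ x := by simp only [hρ_def]; positivity
                exact mul_nonneg this (integral_nonneg (fun y => by
                  have := hnn x y
                  simp only [fa]
                  positivity)))
            · exact hgInt.mul_const I
            · refine Eventually.of_forall (fun x => ?_)
              have h1 : ρ x * (∫ y, fa n a x * fa n a y * Real.exp (ε * ‖x - y‖ ^ 2) ∂(gaussian n))
                  ≤ ρ x * (h x * I) := by
                apply mul_le_mul_of_nonneg_left (hinner x)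
                simp only [hρ_def]; positivity
              rw [hρh x] at h1
              exact h1
        _ = I * I := by rw [integral_mul_const, hIval]
    refine houter.trans_eq ?_
    -- compute I * I
    have sq_rpow : ∀ x : ℝ, 0 < x → x ^ ((n : ℝ) / 2) * x ^ ((n : ℝ) / 2) = x ^ (n : ℝ) := by
      intro x hx
      rw [← Real.rpow_add hx]
      norm_num
    have sq_rpow' : (2 * π) ^ (-(n : ℝ) / 2) * (2 * π) ^ (-(n : ℝ) / 2) = (2 * π) ^ (-(n : ℝ)) := by
      rw [← Real.rpow_add h2π]
      norm_num
    have hπc : (0 : ℝ) < π / c := by positivity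
    calc I * I = ((2 * a + 1) ^ ((n : ℝ) / 2) * (2 * a + 1) ^ ((n : ℝ) / 2))
          * ((2 * π) ^ (-(n : ℝ) / 2) * (2 * π) ^ (-(n : ℝ) / 2))
          * ((π / c) ^ ((n : ℝ) / 2) * (π / c) ^ ((n : ℝ) / 2)) := by
            simp only [hI_def, hK_def]; ring
      _ = (2 * a + 1) ^ (n : ℝ) * (2 * π) ^ (-(n : ℝ)) * (π / c) ^ (n : ℝ) := by
            rw [sq_rpow _ h2a1, sq_rpow', sq_rpow _ hπc]
      _ = ((2 * a + 1) / (2 * π)) ^ (n : ℝ) * (π / c) ^ (n : ℝ) := by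
            rw [Real.div_rpow h2a1.le h2π.le, Real.rpow_neg h2π.le]
            ring
  refine ⟨hmain, ?_⟩
  intro α hα
  set B : ℝ → ℝ := fun a =>
    ((2 * a + 1) / (2 * π)) ^ (n : ℝ) * (π / (a - 2 * ε + 1 / 2)) ^ (n : ℝ) with hB_def
  have hB0 : B 0 = (2 * π) ^ (-(n : ℝ)) * (π / (-2 * ε + 1 / 2)) ^ (n : ℝ) := by
    simp only [hB_def]
    rw [show 2 * (0:ℝ) + 1 = 1 from by norm_num,
      show (0:ℝ) - 2 * ε + 1/2 = -2*ε + 1/2 from by ring,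
      Real.div_rpow zero_le_one h2π.le, Real.one_rpow, Real.rpow_neg h2π.le, one_div]
  have hcont : ContinuousAt B 0 := by
    apply ContinuousAt.mul
    · apply ContinuousAt.rpow_const
      · exact ((continuousAt_const.mul continuousAt_id).add continuousAt_const).div_const _
      · exact Or.inr (Nat.cast_nonneg n)
    · apply ContinuousAt.rpow_const
      · apply ContinuousAt.div continuousAt_const
        · fun_prop
        · norm_num; linarith
      · exact Or.inr (Nat.cast_nonneg n)
  have htend : Tendsto B (𝓝[>] (0 : ℝ)) (𝓝 (B 0)) :=
    (hcont.continuousWithinAt).tendsto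
  have hlt : ∀ᶠ a in 𝓝[>] (0 : ℝ), B a < α := by
    apply htend.eventually_lt_const
    rw [hB0]; exact hα
  filter_upwards [hlt, self_mem_nhdsWithin] with a h1 h2
  exact (hmain a h2).trans h1.le
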